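/- Frame property: if K = ∅ (no static causal laws) and a is executable in s with consistent direct effects e(a,s), then Φ(a,s) contains exactly one state s', and s' = e(a,s) ∪ {l ∈ s : the complement of l is not in e(a,s)}. -/

import Mathlib

/-- A fluent literal over a set `F` of fluent atoms. -/
abbrev Lit (F : Type) := Bool × F

/-- The complement of a literal. -/
def complLit {F : Type} (l : Lit F) : Lit F := (!l.1, l.2)

/-- A static causal law `head if body`. -/
structure Law (F : Type) where
  head : Lit F
  body : Set (Lit F)

/-- A set of literals is consistent if it contains no complementary pair. -/
def consistentSet {F : Type} (u : Set (Lit F)) : Prop :=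
  ∀ f : F, ¬((true, f) ∈ u ∧ (false, f) ∈ u)

/-- `S` is closed under the static causal laws `K`. -/
def closedUnder {F : Type} (K : Set (Law F)) (S : Set (Lit F)) : Prop :=
  ∀ l ∈ K, l.body ⊆ S → l.head ∈ S

/-- `S = Cl_K(u)`: the least consistent superset of `u` closed under `K`. -/
def IsClosure {F : Type} (K : Set (Law F)) (u S : Set (Lit F)) : Prop :=
  u ⊆ S ∧ consistentSet S ∧ closedUnder K S ∧
    ∀ S', u ⊆ S' → consistentSet S' → closedUnder K S' → S ⊆ S'

/-- A state: a maximal consistent set of fluent literals closed under `K`. -/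
def IsState {F : Type} (K : Set (Law F)) (s : Set (Lit F)) : Prop :=
  consistentSet s ∧ closedUnder K s ∧ ∀ f : F, (true, f) ∈ s ∨ (false, f) ∈ s

/-!
Without static laws `Cl_∅` is the identity on consistent sets, so `s' ∈ Φ(a, s)` says exactly
that `s'` is a state with `s' = e ∪ (s ∩ s')`, and a state contains exactly one literal of each
complementary pair. Whether `l` lies in such a fixed point is therefore decided by `l` and `¬l`
alone: `l ∈ e` puts it in, `¬l ∈ e` keeps it out, and otherwise `l ∈ s'` iff `l ∈ s`.
-/

@[simp]
lemma complLit_complLit {F : Type} (l : Lit F) : complLit (complLit l) = l := by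
  simp [complLit]

lemma consistentSet_iff {F : Type} {u : Set (Lit F)} :
    consistentSet u ↔ ∀ l ∈ u, complLit l ∉ u := by
  constructor
  · rintro hu ⟨b, f⟩ hl hcl
    cases b
    exacts [hu f ⟨hcl, hl⟩, hu f ⟨hl, hcl⟩]
  · exact fun hu f ⟨ht, hf⟩ => hu (true, f) ht hf

lemma closedUnder_empty {F : Type} (S : Set (Lit F)) : closedUnder ∅ S :=
  fun _ hl => absurd hl (Set.notMem_empty _)

lemma isState_empty_iff {F : Type} {s : Set (Lit F)} :
    IsState ∅ s ↔ ∀ l, l ∈ s ↔ complLit l ∉ s := by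
  constructor
  · rintro ⟨hc, -, hm⟩ ⟨b, f⟩
    refine ⟨fun hl => consistentSet_iff.1 hc _ hl, fun hcl => ?_⟩
    cases b
    exacts [(hm f).resolve_left hcl, (hm f).resolve_right hcl]
  · intro h
    refine ⟨consistentSet_iff.2 fun l hl => (h l).1 hl, closedUnder_empty s, fun f => ?_⟩
    by_cases ht : (true, f) ∈ s
    exacts [Or.inl ht, Or.inr ((h (false, f)).2 ht)]

lemma isClosure_empty_iff {F : Type} {u S : Set (Lit F)} :
    IsClosure ∅ u S ↔ S = u ∧ consistentSet u := by
  constructor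
  · rintro ⟨hsub, hS, -, hmin⟩
    have hu : consistentSet u := fun f hf => hS f ⟨hsub hf.1, hsub hf.2⟩
    exact ⟨(hmin u le_rfl hu (closedUnder_empty u)).antisymm hsub, hu⟩
  · rintro ⟨rfl, hS⟩
    exact ⟨le_rfl, hS, closedUnder_empty S, fun _ hsub _ _ => hsub⟩

section Inertia

variable {F : Type} {e s : Set (Lit F)}

lemma eq_inertia_of_eq_union_inter (hs : IsState ∅ s) {s' : Set (Lit F)} (hs' : IsState ∅ s')
    (hfix : s' = e ∪ (s ∩ s')) :
    s' = e ∪ {l | l ∈ s ∧ complLit l ∉ e} := by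
  rw [isState_empty_iff] at hs hs'
  ext l
  have := congrArg (l ∈ ·) hfix
  have := congrArg (complLit l ∈ ·) hfix
  have := hs l; have := hs' l
  simp only [Set.mem_union, Set.mem_inter_iff, Set.mem_ofPred_eq, eq_iff_iff] at *
  tauto

lemma isState_inertia (hs : IsState ∅ s) (he : consistentSet e) :
    IsState ∅ (e ∪ {l | l ∈ s ∧ complLit l ∉ e}) := by
  rw [isState_empty_iff] at hs ⊢
  rw [consistentSet_iff] at he
  intro l
  have := hs l; have := he l; have := he (complLit l)
  simp only [Set.mem_union, Set.mem_ofPred_eq, complLit_complLit] at *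
  tauto

lemma inertia_eq_union_inter :
    e ∪ {l | l ∈ s ∧ complLit l ∉ e} = e ∪ (s ∩ (e ∪ {l | l ∈ s ∧ complLit l ∉ e})) := by
  ext l
  simp only [Set.mem_union, Set.mem_inter_iff, Set.mem_ofPred_eq]
  tauto

end Inertia

theorem frame_property_general (F : Type)
    (e s : Set (Lit F))
    (hs : IsState (∅ : Set (Law F)) s)
    (he : consistentSet e) :
    ∀ s' : Set (Lit F),
      (IsState (∅ : Set (Law F)) s' ∧
        IsClosure (∅ : Set (Law F)) (e ∪ (s ∩ s')) s') ↔
      s' = e ∪ {l | l ∈ s ∧ complLit l ∉ e} := by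
  intro s'
  rw [isClosure_empty_iff]
  constructor
  · rintro ⟨hs', hfix, -⟩
    exact eq_inertia_of_eq_union_inter hs hs' hfix
  · rintro rfl
    have hstate := isState_inertia hs he
    rw [← inertia_eq_union_inter]
    exact ⟨hstate, rfl, hstate.1⟩

/-- Frame property: with no static causal laws (`K = ∅`) and consistent direct
effects `e`, the transition from state `s` has exactly one result, namely
`e ∪ {l ∈ s | complement of l ∉ e}`. -/
theorem frame_property (F : Type) [Fintype F]
    (e s : Set (Lit F))
    (hs : IsState (∅ : Set (Law F)) s)
    (he : consistentSet e) :
    ∀ s' : Set (Lit F),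
      (IsState (∅ : Set (Law F)) s' ∧
        IsClosure (∅ : Set (Law F)) (e ∪ (s ∩ s')) s') ↔
      s' = e ∪ {l | l ∈ s ∧ complLit l ∉ e} :=
  frame_property_general F e s hs he
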